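/- arXiv:2308.07689 — 10 statements merged into one kernel-verified Lean document; each statement's English description precedes it below -/
import Mathlib

section
/- Let Ω be a nonempty closed convex subset of ℝⁿ, let F : ℝⁿ → ℝⁿ be monotone, let λ > 0 and p ≥ 1, and let x* ∈ Ω be a solution of VI(Ω,F). Let (x^k)_{k≥0} be a sequence generated by the pth-order proximal point algorithm, i.e., for every k ≥ 0, x^{k+1} ∈ Ω and ⟨x − x^{k+1}, λ F(x^{k+1}) + ‖x^{k+1} − x^k‖^{p−1}(x^{k+1} − x^k)⟩ ≥ 0 for all x ∈ Ω. Then for every k ≥ 0, ‖x^{k+1} − x*‖² ≤ ‖x^k − x*‖² − ‖x^{k+1} − x^k‖². -/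
open scoped InnerProductSpace

theorem pth_order_PPA_contraction {n : ℕ}
    (Ω : Set (EuclideanSpace ℝ (Fin n)))
    (hΩne : Ω.Nonempty) (hΩcl : IsClosed Ω) (hΩcv : Convex ℝ Ω)
    (F : EuclideanSpace ℝ (Fin n) → EuclideanSpace ℝ (Fin n))
    (hF : ∀ u v, 0 ≤ ⟪u - v, F u - F v⟫_ℝ)
    (lam p : ℝ) (hlam : 0 < lam) (hp : 1 ≤ p)
    (xs : EuclideanSpace ℝ (Fin n)) (hxs : xs ∈ Ω)
    (hsol : ∀ x ∈ Ω, 0 ≤ ⟪x - xs, F xs⟫_ℝ)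
    (x : ℕ → EuclideanSpace ℝ (Fin n))
    (hmem : ∀ k : ℕ, x (k + 1) ∈ Ω)
    (hiter : ∀ k : ℕ, ∀ y ∈ Ω,
      0 ≤ ⟪y - x (k + 1),
            lam • F (x (k + 1)) +
              (‖x (k + 1) - x k‖ ^ (p - 1)) • (x (k + 1) - x k)⟫_ℝ)
    (k : ℕ) :
    ‖x (k + 1) - xs‖ ^ 2 ≤ ‖x k - xs‖ ^ 2 - ‖x (k + 1) - x k‖ ^ 2 := by
  set a := x (k + 1) - xs with ha
  set b := x (k + 1) - x k with hb
  have key : ⟪a, b⟫_ℝ ≤ 0 := by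
    by_cases hbz : x (k + 1) = x k
    · simp [hb, hbz]
    · have hbn : (0:ℝ) < ‖b‖ := by
        rw [norm_pos_iff]
        exact sub_ne_zero_of_ne hbz
      have hc : (0:ℝ) < ‖b‖ ^ (p - 1) := Real.rpow_pos_of_pos hbn _
      have h1 := hiter k xs hxs
      have h2 := hsol (x (k + 1)) (hmem k)
      have h3 := hF (x (k + 1)) xs
      have e1 : xs - x (k + 1) = -a := by rw [ha]; abel
      rw [e1, inner_add_right, real_inner_smul_right, real_inner_smul_right,
        inner_neg_left, inner_neg_left] at h1
      rw [inner_sub_right] at h3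
      -- h2 : 0 ≤ ⟪a, F xs⟫
      have hFa : 0 ≤ ⟪a, F (x (k + 1))⟫_ℝ := by
        have := h2
        rw [← ha] at this
        linarith [h3]
      nlinarith [mul_pos hlam hc]
  have expand : ‖x k - xs‖ ^ 2 = ‖a‖ ^ 2 - 2 * ⟪a, b⟫_ℝ + ‖b‖ ^ 2 := by
    have : x k - xs = a - b := by rw [ha, hb]; abel
    rw [this, @norm_sub_sq_real]
  linarith [expand]
end

section
/- Let Ω be a nonempty closed convex subset of ℝⁿ, let F : ℝⁿ → ℝⁿ be monotone, let λ > 0 and p ≥ 1. Let (x^k)_{k≥0} be a sequence generated by the pth-order proximal point algorithm, i.e., for every k ≥ 0, x^{k+1} ∈ Ω and ⟨x − x^{k+1}, λ F(x^{k+1}) + ‖x^{k+1} − x^k‖^{p−1}(x^{k+1} − x^k)⟩ ≥ 0 for all x ∈ Ω. Then for every k ≥ 1, ‖x^{k+1} − x^k‖ ≤ ‖x^k − x^{k−1}‖. -/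
open scoped InnerProductSpace

theorem pth_order_PPA_step_monotone {n : ℕ}
    (Ω : Set (EuclideanSpace ℝ (Fin n)))
    (hΩne : Ω.Nonempty) (hΩcl : IsClosed Ω) (hΩcv : Convex ℝ Ω)
    (F : EuclideanSpace ℝ (Fin n) → EuclideanSpace ℝ (Fin n))
    (hF : ∀ u v, 0 ≤ ⟪u - v, F u - F v⟫_ℝ)
    (lam p : ℝ) (hlam : 0 < lam) (hp : 1 ≤ p)
    (x : ℕ → EuclideanSpace ℝ (Fin n))
    (hmem : ∀ k : ℕ, x (k + 1) ∈ Ω)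
    (hiter : ∀ k : ℕ, ∀ y ∈ Ω,
      0 ≤ ⟪y - x (k + 1),
            lam • F (x (k + 1)) +
              (‖x (k + 1) - x k‖ ^ (p - 1)) • (x (k + 1) - x k)⟫_ℝ)
    (k : ℕ) (hk : 1 ≤ k) :
    ‖x (k + 1) - x k‖ ≤ ‖x k - x (k - 1)‖ := by
  obtain ⟨m, rfl⟩ : ∃ m, k = m + 1 := ⟨k - 1, (Nat.succ_pred_eq_of_pos hk).symm⟩
  simp only [Nat.add_sub_cancel]
  set d1 := x (m + 1 + 1) - x (m + 1) with hd1
  set d0 := x (m + 1) - x m with hd0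
  have h1 := hiter (m + 1) (x (m + 1)) (hmem m)
  have h2 := hiter m (x (m + 1 + 1)) (hmem (m + 1))
  have hmono := hF (x (m + 1 + 1)) (x (m + 1))
  set A := ‖d1‖ ^ (p - 1) with hA
  set B := ‖d0‖ ^ (p - 1) with hB
  have e1 : x (m + 1) - x (m + 1 + 1) = -d1 := by rw [hd1]; abel
  rw [e1, inner_add_right, inner_smul_right, inner_smul_right, inner_neg_left,
    inner_neg_left, real_inner_self_eq_norm_sq] at h1
  rw [inner_add_right, inner_smul_right, inner_smul_right] at h2
  rw [inner_sub_right] at hmono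
  rw [← hd1, ← hd0] at h2
  rw [← hd1] at hmono
  have hcs : ⟪d1, d0⟫_ℝ ≤ ‖d1‖ * ‖d0‖ := real_inner_le_norm d1 d0
  have hBnn : 0 ≤ B := Real.rpow_nonneg (norm_nonneg d0) _
  have key : A * ‖d1‖ ^ 2 ≤ B * (‖d1‖ * ‖d0‖) := by nlinarith [mul_le_mul_of_nonneg_left hcs hBnn]
  rcases eq_or_lt_of_le (norm_nonneg d1) with h0 | h0
  · rw [← h0]; exact norm_nonneg d0
  have hApos : 0 < A := Real.rpow_pos_of_pos h0 _
  have key2 : A * ‖d1‖ ≤ B * ‖d0‖ := by nlinarith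
  by_contra hcon
  push_neg at hcon
  have hd0pos : 0 ≤ ‖d0‖ := norm_nonneg d0
  have hlt : B * ‖d0‖ < A * ‖d1‖ := by
    have hBA : B ≤ A := by
      rcases eq_or_lt_of_le (sub_nonneg.mpr hp) with hq | hq
      · simp [hA, hB, ← hq]
      · exact le_of_lt (Real.rpow_lt_rpow hd0pos hcon hq)
    nlinarith
  linarith
end

section
/- Let Ω be a nonempty closed convex subset of ℝⁿ, let F : ℝⁿ → ℝⁿ be monotone, let λ > 0 and p ≥ 1. Let (x^k)_{k≥0} be a sequence generated by the pth-order proximal point algorithm, i.e., for every k ≥ 0, x^{k+1} ∈ Ω and ⟨x − x^{k+1}, λ F(x^{k+1}) + ‖x^{k+1} − x^k‖^{p−1}(x^{k+1} − x^k)⟩ ≥ 0 for all x ∈ Ω. Then for every k ≥ 1, ‖x^k − x^{k−1}‖^{p−1} ⟨x^k − x^{k−1}, x^{k+1} − x^k⟩ ≥ ‖x^{k+1} − x^k‖^{p+1}. -/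
open scoped InnerProductSpace

theorem pth_order_PPA_cross_term {n : ℕ}
    (Ω : Set (EuclideanSpace ℝ (Fin n)))
    (hΩne : Ω.Nonempty) (hΩcl : IsClosed Ω) (hΩcv : Convex ℝ Ω)
    (F : EuclideanSpace ℝ (Fin n) → EuclideanSpace ℝ (Fin n))
    (hF : ∀ u v, 0 ≤ ⟪u - v, F u - F v⟫_ℝ)
    (lam p : ℝ) (hlam : 0 < lam) (hp : 1 ≤ p)
    (x : ℕ → EuclideanSpace ℝ (Fin n))
    (hmem : ∀ k : ℕ, x (k + 1) ∈ Ω)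
    (hiter : ∀ k : ℕ, ∀ y ∈ Ω,
      0 ≤ ⟪y - x (k + 1),
            lam • F (x (k + 1)) +
              (‖x (k + 1) - x k‖ ^ (p - 1)) • (x (k + 1) - x k)⟫_ℝ)
    (k : ℕ) (hk : 1 ≤ k) :
    ‖x (k + 1) - x k‖ ^ (p + 1) ≤
      ‖x k - x (k - 1)‖ ^ (p - 1) * ⟪x k - x (k - 1), x (k + 1) - x k⟫_ℝ := by
  obtain ⟨j, rfl⟩ : ∃ j, j + 1 = k := ⟨k - 1, Nat.succ_pred_eq_of_pos hk⟩
  simp only [Nat.add_sub_cancel]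
  have h1 := hiter j (x (j + 1 + 1)) (hmem (j + 1))
  have h2 := hiter (j + 1) (x (j + 1)) (hmem j)
  have hmono := hF (x (j + 1 + 1)) (x (j + 1))
  set a := x (j + 1 + 1) - x (j + 1) with ha
  set b := x (j + 1) - x j with hb
  rw [inner_add_right, real_inner_smul_right, real_inner_smul_right] at h1 h2
  have h2' : 0 ≤ -(lam * ⟪a, F (x (j + 1 + 1))⟫_ℝ) - ‖a‖ ^ (p - 1) * ⟪a, a⟫_ℝ := by
    have hneg : x (j + 1) - x (j + 1 + 1) = -a := by rw [ha]; abel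
    rw [hneg, inner_neg_left, inner_neg_left] at h2
    linarith [h2]
  have hmono' : 0 ≤ lam * ⟪a, F (x (j + 1 + 1)) - F (x (j + 1))⟫_ℝ :=
    mul_nonneg hlam.le hmono
  rw [inner_sub_right] at hmono'
  have hself : ⟪a, a⟫_ℝ = ‖a‖ ^ (2 : ℕ) := real_inner_self_eq_norm_sq a
  have key : ‖a‖ ^ (p - 1) * (‖a‖ ^ (2 : ℕ)) ≤ ‖b‖ ^ (p - 1) * ⟪b, a⟫_ℝ := by
    have hba : ⟪a, b⟫_ℝ = ⟪b, a⟫_ℝ := real_inner_comm b a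
    rw [hself] at h2'
    rw [hba] at h1
    linarith [h1, h2', hmono']
  calc ‖a‖ ^ (p + 1) = ‖a‖ ^ (p - 1) * ‖a‖ ^ (2 : ℕ) := by
        rw [← Real.rpow_natCast ‖a‖ 2, ← Real.rpow_add' (norm_nonneg a)]
        · congr 1; push_cast; ring
        · push_cast; intro h; linarith
    _ ≤ ‖b‖ ^ (p - 1) * ⟪b, a⟫_ℝ := key
end

section
/- Let Ω be a nonempty closed convex subset of ℝⁿ, let F : ℝⁿ → ℝⁿ be monotone, let λ > 0 and p ≥ 1, and let x* ∈ Ω be a solution of VI(Ω,F). Let (x^k)_{k≥0} be a sequence generated by the pth-order proximal point algorithm, i.e., for every k ≥ 0, x^{k+1} ∈ Ω and ⟨x − x^{k+1}, λ F(x^{k+1}) + ‖x^{k+1} − x^k‖^{p−1}(x^{k+1} − x^k)⟩ ≥ 0 for all x ∈ Ω. Then for every k ≥ 0, the partial sum ∑_{t=0}^{k} ‖x^t − x^{t+1}‖² ≤ ‖x^0 − x*‖². -/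
open scoped InnerProductSpace

theorem pth_order_PPA_sum_of_squares {n : ℕ}
    (Ω : Set (EuclideanSpace ℝ (Fin n)))
    (hΩne : Ω.Nonempty) (hΩcl : IsClosed Ω) (hΩcv : Convex ℝ Ω)
    (F : EuclideanSpace ℝ (Fin n) → EuclideanSpace ℝ (Fin n))
    (hF : ∀ u v, 0 ≤ ⟪u - v, F u - F v⟫_ℝ)
    (lam p : ℝ) (hlam : 0 < lam) (hp : 1 ≤ p)
    (xs : EuclideanSpace ℝ (Fin n)) (hxs : xs ∈ Ω)
    (hsol : ∀ x ∈ Ω, 0 ≤ ⟪x - xs, F xs⟫_ℝ)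
    (x : ℕ → EuclideanSpace ℝ (Fin n))
    (hmem : ∀ k : ℕ, x (k + 1) ∈ Ω)
    (hiter : ∀ k : ℕ, ∀ y ∈ Ω,
      0 ≤ ⟪y - x (k + 1),
            lam • F (x (k + 1)) +
              (‖x (k + 1) - x k‖ ^ (p - 1)) • (x (k + 1) - x k)⟫_ℝ)
    (k : ℕ) :
    ∑ t ∈ Finset.range (k + 1), ‖x t - x (t + 1)‖ ^ 2 ≤ ‖x 0 - xs‖ ^ 2 := by
  have key : ∀ t : ℕ, ⟪x (t + 1) - xs, x (t + 1) - x t⟫_ℝ ≤ 0 := by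
    intro t
    by_cases hd0 : x (t + 1) - x t = 0
    · simp [hd0]
    · have hc : (0 : ℝ) < ‖x (t + 1) - x t‖ ^ (p - 1) :=
        Real.rpow_pos_of_pos (norm_pos_iff.mpr hd0) _
      have h1 := hiter t xs hxs
      have h2 : 0 ≤ ⟪x (t + 1) - xs, F (x (t + 1))⟫_ℝ := by
        have ha := hF (x (t + 1)) xs
        have hb := hsol (x (t + 1)) (hmem t)
        rw [inner_sub_right] at ha
        linarith
      rw [inner_add_right, real_inner_smul_right, real_inner_smul_right,
        show xs - x (t + 1) = -(x (t + 1) - xs) by abel,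
        inner_neg_left, inner_neg_left] at h1
      nlinarith [mul_nonneg hlam.le h2]
  have step : ∀ t : ℕ,
      ‖x (t + 1) - xs‖ ^ 2 + ‖x t - x (t + 1)‖ ^ 2 ≤ ‖x t - xs‖ ^ 2 := by
    intro t
    have hid : x t - xs = (x t - x (t + 1)) + (x (t + 1) - xs) := by abel
    have := norm_add_sq_real (x t - x (t + 1)) (x (t + 1) - xs)
    rw [← hid] at this
    have hk := key t
    have hsym : ⟪x t - x (t + 1), x (t + 1) - xs⟫_ℝ
        = -⟪x (t + 1) - xs, x (t + 1) - x t⟫_ℝ := by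
      rw [show x t - x (t + 1) = -(x (t + 1) - x t) by abel, inner_neg_left,
        real_inner_comm]
    nlinarith
  have main : ∀ m : ℕ,
      (∑ t ∈ Finset.range (m + 1), ‖x t - x (t + 1)‖ ^ 2) + ‖x (m + 1) - xs‖ ^ 2
        ≤ ‖x 0 - xs‖ ^ 2 := by
    intro m
    induction m with
    | zero => simpa using by linarith [step 0]
    | succ m ih =>
        rw [Finset.sum_range_succ]
        linarith [step (m + 1)]
  linarith [main k, sq_nonneg ‖x (k + 1) - xs‖]
end

section
/- Let Ω be a nonempty closed convex subset of ℝⁿ, let F : ℝⁿ → ℝⁿ be monotone, let λ > 0 and p ≥ 1, and let x* ∈ Ω be a solution of VI(Ω,F). Let (x^k)_{k≥0} be a sequence generated by the pth-order proximal point algorithm, i.e., for every k ≥ 0, x^{k+1} ∈ Ω and ⟨x − x^{k+1}, λ F(x^{k+1}) + ‖x^{k+1} − x^k‖^{p−1}(x^{k+1} − x^k)⟩ ≥ 0 for all x ∈ Ω. Then for every k ≥ 0, ‖x^k − x^{k+1}‖² ≤ ‖x^0 − x*‖² / (k+1). -/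
open scoped InnerProductSpace

theorem pth_order_PPA_step_decay {n : ℕ}
    (Ω : Set (EuclideanSpace ℝ (Fin n)))
    (hΩne : Ω.Nonempty) (hΩcl : IsClosed Ω) (hΩcv : Convex ℝ Ω)
    (F : EuclideanSpace ℝ (Fin n) → EuclideanSpace ℝ (Fin n))
    (hF : ∀ u v, 0 ≤ ⟪u - v, F u - F v⟫_ℝ)
    (lam p : ℝ) (hlam : 0 < lam) (hp : 1 ≤ p)
    (xs : EuclideanSpace ℝ (Fin n)) (hxs : xs ∈ Ω)
    (hsol : ∀ x ∈ Ω, 0 ≤ ⟪x - xs, F xs⟫_ℝ)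
    (x : ℕ → EuclideanSpace ℝ (Fin n))
    (hmem : ∀ k : ℕ, x (k + 1) ∈ Ω)
    (hiter : ∀ k : ℕ, ∀ y ∈ Ω,
      0 ≤ ⟪y - x (k + 1),
            lam • F (x (k + 1)) +
              (‖x (k + 1) - x k‖ ^ (p - 1)) • (x (k + 1) - x k)⟫_ℝ)
    (k : ℕ) :
    ‖x k - x (k + 1)‖ ^ 2 ≤ ‖x 0 - xs‖ ^ 2 / ((k : ℝ) + 1) := by
  have hp0 : (0:ℝ) < p := lt_of_lt_of_le one_pos hp
  -- Step 1: Fejér monotonicity with step term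
  have fejer : ∀ j : ℕ, ‖x (j+1) - xs‖^2 + ‖x (j+1) - x j‖^2 ≤ ‖x j - xs‖^2 := by
    intro j
    have hr0 : 0 ≤ ‖x (j+1) - x j‖ ^ (p-1) := Real.rpow_nonneg (norm_nonneg _) _
    have h1 := hiter j xs hxs
    rw [inner_add_right, real_inner_smul_right, real_inner_smul_right] at h1
    have hmono : 0 ≤ ⟪x (j+1) - xs, F (x (j+1))⟫_ℝ := by
      have h2 := hF (x (j+1)) xs
      have h3 := hsol (x (j+1)) (hmem j)
      rw [inner_sub_right] at h2
      linarith
    have hneg : ⟪xs - x (j+1), F (x (j+1))⟫_ℝ = -⟪x (j+1) - xs, F (x (j+1))⟫_ℝ := by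
      rw [← inner_neg_left, neg_sub]
    have hA : 0 ≤ ‖x (j+1) - x j‖ ^ (p-1) * ⟪xs - x (j+1), x (j+1) - x j⟫_ℝ := by
      nlinarith [mul_nonneg hlam.le hmono]
    rcases eq_or_lt_of_le hr0 with hre | hrpos
    · -- the rpow is zero, so the step itself is zero
      have hb : ‖x (j+1) - x j‖ = 0 := by
        by_contra hb
        have hpos : (0:ℝ) < ‖x (j+1) - x j‖ :=
          lt_of_le_of_ne (norm_nonneg _) (Ne.symm hb)
        have := Real.rpow_pos_of_pos hpos (p-1)
        rw [← hre] at this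
        exact lt_irrefl 0 this
      have hxx : x (j+1) = x j := by
        have := norm_sub_eq_zero_iff.mp hb
        exact this
      rw [hxx]
      simp
    · have hI : 0 ≤ ⟪xs - x (j+1), x (j+1) - x j⟫_ℝ :=
        nonneg_of_mul_nonneg_right hA hrpos
      have expand : ‖x j - xs‖^2 =
          ‖x (j+1) - xs‖^2 + 2 * ⟪x (j+1) - xs, x j - x (j+1)⟫_ℝ
            + ‖x j - x (j+1)‖^2 := by
        have h := norm_add_sq_real (x (j+1) - xs) (x j - x (j+1))
        have heq : x (j+1) - xs + (x j - x (j+1)) = x j - xs := by abel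
        rw [heq] at h
        linarith
      have hflip : ⟪x (j+1) - xs, x j - x (j+1)⟫_ℝ
          = ⟪xs - x (j+1), x (j+1) - x j⟫_ℝ := by
        rw [← inner_neg_neg, neg_sub, neg_sub]
      rw [norm_sub_rev (x (j+1)) (x j)]
      rw [hflip] at expand
      linarith
  -- Step 2: step norms are nonincreasing
  have stepmono : ∀ j : ℕ, ‖x (j+2) - x (j+1)‖ ≤ ‖x (j+1) - x j‖ := by
    intro j
    set a := x (j+1) - x j with ha
    set b := x (j+2) - x (j+1) with hb
    have h1 := hiter j (x (j+2)) (hmem (j+1))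
    have h2 := hiter (j+1) (x (j+1)) (hmem j)
    rw [inner_add_right, real_inner_smul_right, real_inner_smul_right] at h1 h2
    have hm := hF (x (j+2)) (x (j+1))
    rw [inner_sub_right] at hm
    -- rewrite h2's left argument
    have hneg : x (j+1) - x (j+2) = -b := by rw [hb]; abel
    rw [hneg, inner_neg_left, inner_neg_left, real_inner_self_eq_norm_sq] at h2
    -- h1 : 0 ≤ lam * ⟪b, F (x (j+1))⟫ + ra * ⟪b, a⟫
    have hcs : ⟪b, a⟫_ℝ ≤ ‖b‖ * ‖a‖ := real_inner_le_norm b a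
    have hra : 0 ≤ ‖a‖ ^ (p-1) := Real.rpow_nonneg (norm_nonneg _) _
    have hkey : ‖b‖ ^ (p-1) * ‖b‖^2 ≤ ‖a‖ ^ (p-1) * (‖b‖ * ‖a‖) := by
      nlinarith [mul_nonneg hra (sub_nonneg.mpr hcs)]
    rcases eq_or_lt_of_le (norm_nonneg b) with hb0 | hbpos
    · rw [← hb0]; exact norm_nonneg a
    · have hrb : 0 < ‖b‖ ^ (p-1) := Real.rpow_pos_of_pos hbpos _
      have hapos : 0 < ‖a‖ := by
        rcases eq_or_lt_of_le (norm_nonneg a) with ha0 | hap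
        · exfalso
          rw [← ha0, mul_zero, mul_zero] at hkey
          nlinarith [mul_pos hrb (mul_pos hbpos hbpos)]
        · exact hap
      have h3 : ‖b‖ ^ (p-1) * ‖b‖ ≤ ‖a‖ ^ (p-1) * ‖a‖ := by
        have := mul_le_mul_of_nonneg_left hkey (le_of_lt (inv_pos.mpr hbpos))
        calc ‖b‖ ^ (p-1) * ‖b‖ = ‖b‖⁻¹ * (‖b‖ ^ (p-1) * ‖b‖^2) := by
              field_simp
          _ ≤ ‖b‖⁻¹ * (‖a‖ ^ (p-1) * (‖b‖ * ‖a‖)) := this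
          _ = ‖a‖ ^ (p-1) * ‖a‖ := by field_simp
      have hbp : ‖b‖ ^ p ≤ ‖a‖ ^ p := by
        rw [show p = p - 1 + 1 by ring, Real.rpow_add_one (ne_of_gt hbpos),
          Real.rpow_add_one (ne_of_gt hapos)]
        simpa using h3
      by_contra hcon
      push_neg at hcon
      have := Real.rpow_lt_rpow (norm_nonneg a) hcon hp0
      linarith
  -- antitone
  have anti : ∀ i j : ℕ, i ≤ j → ‖x (j+1) - x j‖ ≤ ‖x (i+1) - x i‖ := by
    have : Antitone (fun j : ℕ => ‖x (j+1) - x j‖) :=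
      antitone_nat_of_succ_le fun j => stepmono j
    exact fun i j h => this h
  -- telescoping sum
  have sum_le : ∀ m : ℕ,
      (∑ j ∈ Finset.range (m+1), ‖x (j+1) - x j‖^2) + ‖x (m+1) - xs‖^2
        ≤ ‖x 0 - xs‖^2 := by
    intro m
    induction m with
    | zero =>
      have h := fejer 0
      norm_num at h ⊢
      linarith
    | succ m ih =>
      rw [Finset.sum_range_succ]
      have := fejer (m+1)
      linarith
  have hsum := sum_le k
  have hterm : ((k:ℝ)+1) * ‖x (k+1) - x k‖^2
      ≤ ∑ j ∈ Finset.range (k+1), ‖x (j+1) - x j‖^2 := by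
    have hle : ∀ j ∈ Finset.range (k+1),
        ‖x (k+1) - x k‖^2 ≤ ‖x (j+1) - x j‖^2 := by
      intro j hj
      have hjk : j ≤ k := Nat.lt_succ_iff.mp (Finset.mem_range.mp hj)
      have := anti j k hjk
      nlinarith [norm_nonneg (x (k+1) - x k)]
    calc ((k:ℝ)+1) * ‖x (k+1) - x k‖^2
        = ∑ _j ∈ Finset.range (k+1), ‖x (k+1) - x k‖^2 := by
          rw [Finset.sum_const, Finset.card_range]; push_cast; ring
      _ ≤ _ := Finset.sum_le_sum hle
  have hpos : (0:ℝ) < (k:ℝ) + 1 := by positivity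
  rw [norm_sub_rev, le_div_iff₀ hpos]
  nlinarith [sq_nonneg ‖x (k+1) - xs‖]
end

section
/- Let Ω be a nonempty closed convex subset of ℝⁿ, let F : ℝⁿ → ℝⁿ be monotone, let λ > 0 and p ≥ 1, and let x* ∈ Ω be a solution of VI(Ω,F). Let (x^k)_{k≥0} be a sequence generated by the pth-order proximal point algorithm, i.e., for every k ≥ 0, x^{k+1} ∈ Ω and ⟨x − x^{k+1}, λ F(x^{k+1}) + ‖x^{k+1} − x^k‖^{p−1}(x^{k+1} − x^k)⟩ ≥ 0 for all x ∈ Ω. Then for every k ≥ 0 and every x ∈ Ω, ⟨x − x^{k+1}, F(x^{k+1})⟩ ≥ −(1/λ) · (‖x^0 − x*‖^p / (k+1)^{p/2}) · ‖x − x^{k+1}‖. -/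
open scoped InnerProductSpace

theorem pth_order_PPA_rate {n : ℕ}
    (Ω : Set (EuclideanSpace ℝ (Fin n)))
    (hΩne : Ω.Nonempty) (hΩcl : IsClosed Ω) (hΩcv : Convex ℝ Ω)
    (F : EuclideanSpace ℝ (Fin n) → EuclideanSpace ℝ (Fin n))
    (hF : ∀ u v, 0 ≤ ⟪u - v, F u - F v⟫_ℝ)
    (lam p : ℝ) (hlam : 0 < lam) (hp : 1 ≤ p)
    (xs : EuclideanSpace ℝ (Fin n)) (hxs : xs ∈ Ω)
    (hsol : ∀ x ∈ Ω, 0 ≤ ⟪x - xs, F xs⟫_ℝ)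
    (x : ℕ → EuclideanSpace ℝ (Fin n))
    (hmem : ∀ k : ℕ, x (k + 1) ∈ Ω)
    (hiter : ∀ k : ℕ, ∀ y ∈ Ω,
      0 ≤ ⟪y - x (k + 1),
            lam • F (x (k + 1)) +
              (‖x (k + 1) - x k‖ ^ (p - 1)) • (x (k + 1) - x k)⟫_ℝ)
    (k : ℕ) (y : EuclideanSpace ℝ (Fin n)) (hy : y ∈ Ω) :
    -(1 / lam) * (‖x 0 - xs‖ ^ p / ((k : ℝ) + 1) ^ (p / 2)) * ‖y - x (k + 1)‖ ≤
      ⟪y - x (k + 1), F (x (k + 1))⟫_ℝ := by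
  have hp0 : (0:ℝ) < p := by linarith
  set a : ℕ → ℝ := fun j => ‖x (j + 1) - x j‖ with ha
  have hanonneg : ∀ j, 0 ≤ a j := fun j => norm_nonneg _
  have hcoeff : ∀ j, 0 ≤ a j ^ (p - 1) := fun j => Real.rpow_nonneg (hanonneg j) _
  have hexp : ∀ (j : ℕ) (z : EuclideanSpace ℝ (Fin n)),
      ⟪z - x (j + 1), lam • F (x (j + 1)) +
          (‖x (j + 1) - x j‖ ^ (p - 1)) • (x (j + 1) - x j)⟫_ℝ
      = lam * ⟪z - x (j + 1), F (x (j + 1))⟫_ℝ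
        + a j ^ (p - 1) * ⟪z - x (j + 1), x (j + 1) - x j⟫_ℝ := by
    intro j z
    rw [inner_add_right, real_inner_smul_right, real_inner_smul_right]
  -- Step A: ⟪xs - x(k+1), x(k+1) - x k⟫ ≥ 0
  have hA : ∀ j, 0 ≤ ⟪xs - x (j + 1), x (j + 1) - x j⟫_ℝ := by
    intro j
    have hsolk : 0 ≤ ⟪x (j + 1) - xs, F xs⟫_ℝ := hsol _ (hmem j)
    have hmono := hF (x (j + 1)) xs
    rw [inner_sub_right] at hmono
    have hFneg : ⟪xs - x (j + 1), F (x (j + 1))⟫_ℝ ≤ 0 := by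
      have hne : xs - x (j + 1) = -(x (j + 1) - xs) := by abel
      rw [hne, inner_neg_left]
      linarith
    have h := hiter j xs hxs
    rw [hexp] at h
    have h2 : 0 ≤ a j ^ (p - 1) * ⟪xs - x (j + 1), x (j + 1) - x j⟫_ℝ := by
      nlinarith [mul_nonpos_of_nonneg_of_nonpos hlam.le hFneg]
    by_cases hz : a j = 0
    · have : x (j + 1) - x j = 0 := by
        have := norm_eq_zero.mp hz
        exact this
      rw [this, inner_zero_right]
    · have hpos : 0 < a j ^ (p - 1) :=
        Real.rpow_pos_of_pos (lt_of_le_of_ne (hanonneg j) (Ne.symm hz)) _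
      nlinarith
  -- Step B: Fejér inequality
  have hB : ∀ j, ‖x (j + 1) - xs‖ ^ 2 + a j ^ 2 ≤ ‖x j - xs‖ ^ 2 := by
    intro j
    have hid : x j - xs = (x (j + 1) - xs) - (x (j + 1) - x j) := by abel
    have hinner : ⟪x (j + 1) - xs, x (j + 1) - x j⟫_ℝ ≤ 0 := by
      have h := hA j
      have hne : xs - x (j + 1) = -(x (j + 1) - xs) := by abel
      rw [hne, inner_neg_left] at h
      linarith
    have hsq := norm_sub_sq_real (x (j + 1) - xs) (x (j + 1) - x j)
    rw [← hid] at hsq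
    simp only [ha]
    nlinarith
  -- Step C: a is nonincreasing
  have hC : ∀ j, a (j + 1) ≤ a j := by
    intro j
    by_cases hz : a (j + 1) = 0
    · rw [hz]; exact hanonneg j
    have ht : 0 < a (j + 1) := lt_of_le_of_ne (hanonneg _) (Ne.symm hz)
    have h1 := hiter j (x (j + 2)) (hmem (j + 1))
    have h2 := hiter (j + 1) (x (j + 1)) (hmem j)
    rw [hexp] at h1 h2
    have hm := hF (x (j + 2)) (x (j + 1))
    rw [inner_sub_right] at hm
    -- rewrite inner products in h2
    have hne : x (j + 1) - x (j + 1 + 1) = -(x (j + 2) - x (j + 1)) := by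
      norm_num
    rw [hne, inner_neg_left, inner_neg_left] at h2
    have hself : ⟪x (j + 2) - x (j + 1), x (j + 1 + 1) - x (j + 1)⟫_ℝ
        = a (j + 1) ^ 2 := by
      have : x (j + 1 + 1) - x (j + 1) = x (j + 2) - x (j + 1) := by norm_num
      rw [this, real_inner_self_eq_norm_sq]
    rw [hself] at h2
    -- combine: a(j+1)^{p-1} * a(j+1)^2 ≤ a j^{p-1} * J
    have hkey : a (j + 1) ^ (p - 1) * a (j + 1) ^ 2
        ≤ a j ^ (p - 1) * ⟪x (j + 2) - x (j + 1), x (j + 1) - x j⟫_ℝ := by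
      have hlm : 0 ≤ lam * (⟪x (j + 2) - x (j + 1), F (x (j + 2))⟫_ℝ
          - ⟪x (j + 2) - x (j + 1), F (x (j + 1))⟫_ℝ) := mul_nonneg hlam.le hm
      have h1' : 0 ≤ lam * ⟪x (j + 2) - x (j + 1), F (x (j + 1))⟫_ℝ
          + a j ^ (p - 1) * ⟪x (j + 2) - x (j + 1), x (j + 1) - x j⟫_ℝ := by
        have : x (j + 2) = x (j + 1 + 1) := by norm_num
        convert h1 using 3 <;> rw [this]
      nlinarith [h2, h1', hlm]
    by_cases hz0 : a j = 0
    · exfalso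
      have : x (j + 1) - x j = 0 := norm_eq_zero.mp hz0
      rw [this, inner_zero_right, mul_zero] at hkey
      have h3 := Real.rpow_pos_of_pos ht (p - 1)
      nlinarith [mul_pos h3 (pow_pos ht 2)]
    have haj : 0 < a j := lt_of_le_of_ne (hanonneg _) (Ne.symm hz0)
    -- Cauchy-Schwarz
    have hcs : ⟪x (j + 2) - x (j + 1), x (j + 1) - x j⟫_ℝ ≤ a (j + 1) * a j := by
      have := real_inner_le_norm (x (j + 2) - x (j + 1)) (x (j + 1) - x j)
      simpa [ha] using this
    have hkey2 : a (j + 1) ^ (p - 1) * a (j + 1) ^ 2 ≤ a j ^ (p - 1) * (a (j + 1) * a j) :=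
      le_trans hkey (mul_le_mul_of_nonneg_left hcs (hcoeff j))
    -- rewrite both sides with rpow arithmetic
    have hlhs : a (j + 1) ^ (p - 1) * a (j + 1) ^ 2 = a (j + 1) ^ p * a (j + 1) := by
      have h1 : a (j + 1) ^ p = a (j + 1) ^ (p - 1) * a (j + 1) := by
        rw [← Real.rpow_add_one (ne_of_gt ht) (p - 1)]
        norm_num
      rw [h1]; ring
    have hrhs : a j ^ (p - 1) * (a (j + 1) * a j) = a j ^ p * a (j + 1) := by
      have h1 : a j ^ p = a j ^ (p - 1) * a j := by
        rw [← Real.rpow_add_one (ne_of_gt haj) (p - 1)]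
        norm_num
      rw [h1]; ring
    rw [hlhs, hrhs] at hkey2
    have hpow : a (j + 1) ^ p ≤ a j ^ p := le_of_mul_le_mul_right hkey2 ht
    by_contra hcon
    push_neg at hcon
    have := Real.rpow_lt_rpow (hanonneg j) hcon hp0
    linarith
  -- Step D: (k+1) * a k ^ 2 ≤ ‖x 0 - xs‖ ^ 2, by induction
  have hD : ∀ j : ℕ, ‖x (j + 1) - xs‖ ^ 2 + ((j : ℝ) + 1) * a j ^ 2 ≤ ‖x 0 - xs‖ ^ 2 := by
    intro j
    induction j with
    | zero => simpa using hB 0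
    | succ m ih =>
      have hsq : a (m + 1) ^ 2 ≤ a m ^ 2 := by
        nlinarith [hC m, hanonneg (m + 1)]
      have hmul : ((m : ℝ) + 1) * a (m + 1) ^ 2 ≤ ((m : ℝ) + 1) * a m ^ 2 :=
        mul_le_mul_of_nonneg_left hsq (by positivity)
      have hb := hB (m + 1)
      push_cast
      push_cast at ih
      nlinarith
  -- Step E: a k ^ p ≤ ‖x 0 - xs‖ ^ p / (k+1) ^ (p/2)
  set R := ‖x 0 - xs‖ with hR
  have hRnn : 0 ≤ R := norm_nonneg _
  set s : ℝ := (k : ℝ) + 1 with hs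
  have hspos : 0 < s := by positivity
  have hD' : s * a k ^ 2 ≤ R ^ 2 := by
    have := hD k
    nlinarith [sq_nonneg ‖x (k + 1) - xs‖]
  have hq : a k * s ^ ((1:ℝ)/2) ≤ R := by
    have hsq : (a k * s ^ ((1:ℝ)/2)) ^ 2 ≤ R ^ 2 := by
      have h1 : (s ^ ((1:ℝ)/2)) ^ 2 = s := by
        rw [← Real.rpow_natCast (s ^ ((1:ℝ)/2)) 2, ← Real.rpow_mul hspos.le]
        norm_num
      calc (a k * s ^ ((1:ℝ)/2)) ^ 2 = s * a k ^ 2 := by rw [mul_pow, h1]; ring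
        _ ≤ R ^ 2 := hD'
    nlinarith [mul_nonneg (hanonneg k) (Real.rpow_nonneg hspos.le ((1:ℝ)/2)), hRnn]
  have hE : a k ^ p ≤ R ^ p / s ^ (p / 2) := by
    have h1 : (a k * s ^ ((1:ℝ)/2)) ^ p ≤ R ^ p :=
      Real.rpow_le_rpow (by positivity) hq hp0.le
    have h2 : (a k * s ^ ((1:ℝ)/2)) ^ p = a k ^ p * s ^ (p / 2) := by
      rw [Real.mul_rpow (hanonneg k) (Real.rpow_nonneg hspos.le _),
        ← Real.rpow_mul hspos.le, show (1:ℝ)/2 * p = p / 2 by ring]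
    rw [h2] at h1
    rw [le_div_iff₀ (Real.rpow_pos_of_pos hspos _)]
    exact h1
  -- Final step
  have h := hiter k y hy
  rw [hexp] at h
  set yy := ‖y - x (k + 1)‖ with hyy
  have hyynn : 0 ≤ yy := norm_nonneg _
  have hcs : a k ^ (p - 1) * ⟪y - x (k + 1), x (k + 1) - x k⟫_ℝ ≤ a k ^ p * yy := by
    have hcs0 : ⟪y - x (k + 1), x (k + 1) - x k⟫_ℝ ≤ yy * a k :=
      real_inner_le_norm _ _
    have := mul_le_mul_of_nonneg_left hcs0 (hcoeff k)
    have hpw : a k ^ (p - 1) * (yy * a k) = a k ^ p * yy := by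
      by_cases hz : a k = 0
      · rw [hz, Real.zero_rpow hp0.ne']
        ring
      · have h1 : a k ^ p = a k ^ (p - 1) * a k := by
          rw [← Real.rpow_add_one hz (p - 1)]; norm_num
        rw [h1]; ring
    linarith [hpw ▸ this]
  have hlow : -(a k ^ p * yy) ≤ lam * ⟪y - x (k + 1), F (x (k + 1))⟫_ℝ := by
    linarith
  have hbnd : -(R ^ p / s ^ (p / 2) * yy) ≤ -(a k ^ p * yy) := by
    have := mul_le_mul_of_nonneg_right hE hyynn
    linarith
  have hfin : lam * (-(1 / lam) * (R ^ p / s ^ (p / 2)) * yy)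
      ≤ lam * ⟪y - x (k + 1), F (x (k + 1))⟫_ℝ := by
    have heq : lam * (-(1 / lam) * (R ^ p / s ^ (p / 2)) * yy)
        = -(R ^ p / s ^ (p / 2) * yy) := by
      field_simp
    rw [heq]
    linarith
  exact le_of_mul_le_mul_left hfin hlam
end

section
/- Let Ω be a nonempty closed convex subset of ℝⁿ, let F : ℝⁿ → ℝⁿ be monotone, let λ > 0 and p ≥ 1, and let x* ∈ Ω be a solution of VI(Ω,F). Let (x^k)_{k≥0} be a sequence generated by the pth-order proximal point algorithm, i.e., for every k ≥ 0, x^{k+1} ∈ Ω and ⟨x − x^{k+1}, λ F(x^{k+1}) + ‖x^{k+1} − x^k‖^{p−1}(x^{k+1} − x^k)⟩ ≥ 0 for all x ∈ Ω. Then for every k ≥ 0 and every x ∈ Ω with ‖x − x^{k+1}‖ ≤ 1, ⟨x − x^{k+1}, F(x^{k+1})⟩ ≥ −(1/λ) · ‖x^0 − x*‖^p / (k+1)^{p/2}. -/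
open scoped InnerProductSpace

theorem pth_order_PPA_approx_solution {n : ℕ}
    (Ω : Set (EuclideanSpace ℝ (Fin n)))
    (hΩne : Ω.Nonempty) (hΩcl : IsClosed Ω) (hΩcv : Convex ℝ Ω)
    (F : EuclideanSpace ℝ (Fin n) → EuclideanSpace ℝ (Fin n))
    (hF : ∀ u v, 0 ≤ ⟪u - v, F u - F v⟫_ℝ)
    (lam p : ℝ) (hlam : 0 < lam) (hp : 1 ≤ p)
    (xs : EuclideanSpace ℝ (Fin n)) (hxs : xs ∈ Ω)
    (hsol : ∀ x ∈ Ω, 0 ≤ ⟪x - xs, F xs⟫_ℝ)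
    (x : ℕ → EuclideanSpace ℝ (Fin n))
    (hmem : ∀ k : ℕ, x (k + 1) ∈ Ω)
    (hiter : ∀ k : ℕ, ∀ y ∈ Ω,
      0 ≤ ⟪y - x (k + 1),
            lam • F (x (k + 1)) +
              (‖x (k + 1) - x k‖ ^ (p - 1)) • (x (k + 1) - x k)⟫_ℝ)
    (k : ℕ) (y : EuclideanSpace ℝ (Fin n)) (hy : y ∈ Ω)
    (hball : ‖y - x (k + 1)‖ ≤ 1) :
    -(1 / lam) * (‖x 0 - xs‖ ^ p / ((k : ℝ) + 1) ^ (p / 2)) ≤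
      ⟪y - x (k + 1), F (x (k + 1))⟫_ℝ := by
  have hp0 : (0:ℝ) < p := lt_of_lt_of_le one_pos hp
  -- helper: t^(p-1) * t = t^p for t ≥ 0
  have hrp : ∀ t : ℝ, 0 ≤ t → t ^ (p-1) * t = t ^ p := by
    intro t ht
    rcases eq_or_lt_of_le ht with h0 | h0
    · rw [← h0, Real.zero_rpow (ne_of_gt hp0), mul_zero]
    · calc t ^ (p-1) * t = t ^ (p-1) * t ^ (1:ℝ) := by rw [Real.rpow_one]
        _ = t ^ (p - 1 + 1) := (Real.rpow_add h0 _ _).symm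
        _ = t ^ p := by norm_num
  -- Fejér-type inequality
  have hA : ∀ m : ℕ, ‖x (m+1) - xs‖^2 + ‖x (m+1) - x m‖^2 ≤ ‖x m - xs‖^2 := by
    intro m
    have h1 := hiter m xs hxs
    rw [inner_add_right, real_inner_smul_right, real_inner_smul_right] at h1
    have hFle : ⟪xs - x (m+1), F (x (m+1))⟫_ℝ ≤ 0 := by
      have h2 := hF (x (m+1)) xs
      have h3 := hsol (x (m+1)) (hmem m)
      rw [inner_sub_right] at h2
      have h4 : ⟪xs - x (m+1), F (x (m+1))⟫_ℝ = - ⟪x (m+1) - xs, F (x (m+1))⟫_ℝ := by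
        rw [← inner_neg_left, neg_sub]
      rw [h4]; linarith
    have hinner : (0:ℝ) ≤ ⟪xs - x (m+1), x (m+1) - x m⟫_ℝ := by
      rcases eq_or_ne (x (m+1) - x m) 0 with h0 | h0
      · rw [h0, inner_zero_right]
      · have hc : 0 < ‖x (m+1) - x m‖ ^ (p-1) :=
          Real.rpow_pos_of_pos (norm_pos_iff.mpr h0) _
        have h5 : lam * ⟪xs - x (m+1), F (x (m+1))⟫_ℝ ≤ 0 :=
          mul_nonpos_of_nonneg_of_nonpos hlam.le hFle
        have h6 : 0 ≤ ‖x (m+1) - x m‖ ^ (p-1) * ⟪xs - x (m+1), x (m+1) - x m⟫_ℝ := by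
          linarith
        exact (mul_nonneg_iff_of_pos_left hc).mp h6
    have hexp := @norm_sub_sq_real (EuclideanSpace ℝ (Fin n)) _ _ (x (m+1) - xs) (x (m+1) - x m)
    have heq : x (m+1) - xs - (x (m+1) - x m) = x m - xs := by abel
    rw [heq] at hexp
    have h7 : ⟪x (m+1) - xs, x (m+1) - x m⟫_ℝ = - ⟪xs - x (m+1), x (m+1) - x m⟫_ℝ := by
      rw [← inner_neg_left, neg_sub]
    rw [h7] at hexp
    linarith
  -- monotone step sizes
  have hB : ∀ m : ℕ, ‖x (m+1+1) - x (m+1)‖ ≤ ‖x (m+1) - x m‖ := by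
    intro m
    have h1 := hiter m (x (m+1+1)) (hmem (m+1))
    have h2 := hiter (m+1) (x (m+1)) (hmem m)
    rw [inner_add_right, real_inner_smul_right, real_inner_smul_right] at h1 h2
    have hmono := hF (x (m+1+1)) (x (m+1))
    rw [inner_sub_right] at hmono
    have e1 : ⟪x (m+1) - x (m+1+1), F (x (m+1+1))⟫_ℝ
        = - ⟪x (m+1+1) - x (m+1), F (x (m+1+1))⟫_ℝ := by
      rw [← inner_neg_left, neg_sub]
    have e2 : ⟪x (m+1) - x (m+1+1), x (m+1+1) - x (m+1)⟫_ℝ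
        = - ‖x (m+1+1) - x (m+1)‖^2 := by
      have hneg : x (m+1) - x (m+1+1) = -(x (m+1+1) - x (m+1)) := by abel
      rw [hneg, inner_neg_left, real_inner_self_eq_norm_sq]
    rw [e1, e2] at h2
    have hlm := mul_nonneg hlam.le hmono
    have hchain : ‖x (m+1+1) - x (m+1)‖ ^ (p-1) * ‖x (m+1+1) - x (m+1)‖^2
        ≤ ‖x (m+1) - x m‖ ^ (p-1) * ⟪x (m+1+1) - x (m+1), x (m+1) - x m⟫_ℝ := by
      nlinarith [h1, h2, hlm]
    have hcau := real_inner_le_norm (x (m+1+1) - x (m+1)) (x (m+1) - x m)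
    have hcnn : 0 ≤ ‖x (m+1) - x m‖ ^ (p-1) := Real.rpow_nonneg (norm_nonneg _) _
    have hkey : ‖x (m+1+1) - x (m+1)‖ ^ p * ‖x (m+1+1) - x (m+1)‖
        ≤ ‖x (m+1) - x m‖ ^ p * ‖x (m+1+1) - x (m+1)‖ := by
      calc ‖x (m+1+1) - x (m+1)‖ ^ p * ‖x (m+1+1) - x (m+1)‖
          = ‖x (m+1+1) - x (m+1)‖ ^ (p-1) * ‖x (m+1+1) - x (m+1)‖
              * ‖x (m+1+1) - x (m+1)‖ := by rw [hrp _ (norm_nonneg _)]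
        _ = ‖x (m+1+1) - x (m+1)‖ ^ (p-1) * ‖x (m+1+1) - x (m+1)‖^2 := by ring
        _ ≤ ‖x (m+1) - x m‖ ^ (p-1) * ⟪x (m+1+1) - x (m+1), x (m+1) - x m⟫_ℝ := hchain
        _ ≤ ‖x (m+1) - x m‖ ^ (p-1) * (‖x (m+1+1) - x (m+1)‖ * ‖x (m+1) - x m‖) :=
            mul_le_mul_of_nonneg_left hcau hcnn
        _ = ‖x (m+1) - x m‖ ^ (p-1) * ‖x (m+1) - x m‖ * ‖x (m+1+1) - x (m+1)‖ := by ring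
        _ = ‖x (m+1) - x m‖ ^ p * ‖x (m+1+1) - x (m+1)‖ := by rw [hrp _ (norm_nonneg _)]
    rcases eq_or_lt_of_le (norm_nonneg (x (m+1+1) - x (m+1))) with h0 | h0
    · rw [← h0]; exact norm_nonneg _
    · have hpow : ‖x (m+1+1) - x (m+1)‖ ^ p ≤ ‖x (m+1) - x m‖ ^ p :=
        le_of_mul_le_mul_right hkey h0
      by_contra hcon
      push_neg at hcon
      have := Real.rpow_lt_rpow (norm_nonneg _) hcon hp0
      linarith
  -- summation bound
  have hC : ∀ m : ℕ, ((m:ℝ)+1) * ‖x (m+1) - x m‖^2 + ‖x (m+1) - xs‖^2 ≤ ‖x 0 - xs‖^2 := by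
    intro m
    induction m with
    | zero =>
      have := hA 0
      push_cast
      linarith
    | succ j ih =>
      have h1 := hA (j+1)
      have h2 := hB j
      have h3 : ‖x (j+1+1) - x (j+1)‖^2 ≤ ‖x (j+1) - x j‖^2 := by
        nlinarith [norm_nonneg (x (j+1+1) - x (j+1)), norm_nonneg (x (j+1) - x j)]
      have h4 : (0:ℝ) ≤ (j:ℝ) + 1 := by positivity
      push_cast
      nlinarith [h3, h1, ih, h4]
  -- step size bound
  have hkpos : (0:ℝ) < (k:ℝ)+1 := by positivity
  set s : ℝ := ((k:ℝ)+1) ^ ((1:ℝ)/2) with hs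
  have hspos : 0 < s := Real.rpow_pos_of_pos hkpos _
  have hs2 : s^2 = (k:ℝ)+1 := by
    rw [hs, ← Real.rpow_natCast (((k:ℝ)+1) ^ ((1:ℝ)/2)) 2, ← Real.rpow_mul hkpos.le]
    norm_num
  have hq : 0 ≤ ‖x 0 - xs‖ / s := div_nonneg (norm_nonneg _) hspos.le
  have hdk : ‖x (k+1) - x k‖ ≤ ‖x 0 - xs‖ / s := by
    have hq2 : (‖x 0 - xs‖ / s)^2 = ‖x 0 - xs‖^2 / ((k:ℝ)+1) := by
      rw [div_pow, hs2]
    have ha2 : ‖x (k+1) - x k‖^2 ≤ (‖x 0 - xs‖ / s)^2 := by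
      rw [hq2, le_div_iff₀ hkpos]
      nlinarith [hC k, norm_nonneg (x (k+1) - xs)]
    calc ‖x (k+1) - x k‖ = Real.sqrt (‖x (k+1) - x k‖^2) :=
          (Real.sqrt_sq (norm_nonneg _)).symm
      _ ≤ Real.sqrt ((‖x 0 - xs‖ / s)^2) := Real.sqrt_le_sqrt ha2
      _ = ‖x 0 - xs‖ / s := Real.sqrt_sq hq
  have hdkp : ‖x (k+1) - x k‖ ^ p ≤ ‖x 0 - xs‖ ^ p / ((k:ℝ)+1) ^ (p/2) := by
    have h1 : ‖x (k+1) - x k‖ ^ p ≤ (‖x 0 - xs‖ / s) ^ p :=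
      Real.rpow_le_rpow (norm_nonneg _) hdk hp0.le
    have h2 : (‖x 0 - xs‖ / s) ^ p = ‖x 0 - xs‖ ^ p / s ^ p :=
      Real.div_rpow (norm_nonneg _) hspos.le p
    have h3 : s ^ p = ((k:ℝ)+1) ^ (p/2) := by
      rw [hs, ← Real.rpow_mul hkpos.le, show (1:ℝ)/2*p = p/2 by ring]
    rw [h2, h3] at h1
    exact h1
  -- final assembly
  have h1 := hiter k y hy
  rw [inner_add_right, real_inner_smul_right, real_inner_smul_right] at h1
  have hcau := real_inner_le_norm (y - x (k+1)) (x (k+1) - x k)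
  have hcnn : 0 ≤ ‖x (k+1) - x k‖ ^ (p-1) := Real.rpow_nonneg (norm_nonneg _) _
  have h2 : ‖x (k+1) - x k‖ ^ (p-1) * ⟪y - x (k+1), x (k+1) - x k⟫_ℝ
      ≤ ‖x (k+1) - x k‖ ^ p := by
    calc ‖x (k+1) - x k‖ ^ (p-1) * ⟪y - x (k+1), x (k+1) - x k⟫_ℝ
        ≤ ‖x (k+1) - x k‖ ^ (p-1) * (‖y - x (k+1)‖ * ‖x (k+1) - x k‖) :=
          mul_le_mul_of_nonneg_left hcau hcnn
      _ ≤ ‖x (k+1) - x k‖ ^ (p-1) * (1 * ‖x (k+1) - x k‖) := by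
          apply mul_le_mul_of_nonneg_left _ hcnn
          exact mul_le_mul_of_nonneg_right hball (norm_nonneg _)
      _ = ‖x (k+1) - x k‖ ^ (p-1) * ‖x (k+1) - x k‖ := by ring
      _ = ‖x (k+1) - x k‖ ^ p := hrp _ (norm_nonneg _)
  have h4 : -(‖x 0 - xs‖ ^ p / ((k:ℝ)+1) ^ (p/2)) ≤ lam * ⟪y - x (k+1), F (x (k+1))⟫_ℝ := by
    linarith
  have h5 : -(1/lam) * (‖x 0 - xs‖ ^ p / ((k:ℝ)+1) ^ (p/2))
      = -(‖x 0 - xs‖ ^ p / ((k:ℝ)+1) ^ (p/2)) / lam := by ring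
  rw [h5, div_le_iff₀ hlam]
  linarith [h4, mul_comm lam ⟪y - x (k+1), F (x (k+1))⟫_ℝ]
end

section
/- Let 𝒳 be a nonempty closed convex subset of ℝⁿ, let f : ℝⁿ → ℝ be convex, let A : ℝⁿ → ℝᵐ be a linear map with adjoint Aᵀ, let b ∈ ℝᵐ, β > 0, p ≥ 1, and λ ∈ ℝᵐ. Suppose x⁺ ∈ 𝒳 and g ∈ ℝⁿ satisfy: (i) g is a subgradient of f at x⁺, i.e., f(y) ≥ f(x⁺) + ⟨g, y − x⁺⟩ for all y ∈ ℝⁿ; (ii) the first-order optimality condition ⟨x − x⁺, g + Aᵀλ + β^{1/p} Aᵀ iₚ(A x⁺ − b)⟩ ≥ 0 for all x ∈ 𝒳. Define λ⁺ = λ + β^{1/p} iₚ(A x⁺ − b). Then: (a) ⟨x − x⁺, g + Aᵀλ⁺⟩ ≥ 0 for all x ∈ 𝒳, and (b) ⟨μ − λ⁺, −A x⁺ + b + (1/β) ‖λ⁺ − λ‖^{p−1} (λ⁺ − λ)⟩ ≥ 0 for all μ ∈ ℝᵐ. -/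
open scoped InnerProductSpace
open Classical

/-- The map `iₚ(x) = x / ‖x‖^(1 - 1/p)` for `x ≠ 0`, and `iₚ(0) = 0`. -/
noncomputable def ip {m : ℕ} (p : ℝ) (x : EuclideanSpace ℝ (Fin m)) :
    EuclideanSpace ℝ (Fin m) :=
  if x = 0 then 0 else (‖x‖ ^ (1 - 1 / p))⁻¹ • x

theorem pth_order_ALM_step_VI {n m : ℕ}
    (X : Set (EuclideanSpace ℝ (Fin n)))
    (hXne : X.Nonempty) (hXcl : IsClosed X) (hXcv : Convex ℝ X)
    (f : EuclideanSpace ℝ (Fin n) → ℝ) (hf : ConvexOn ℝ Set.univ f)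
    (A : EuclideanSpace ℝ (Fin n) →L[ℝ] EuclideanSpace ℝ (Fin m))
    (b : EuclideanSpace ℝ (Fin m)) (β p : ℝ) (hβ : 0 < β) (hp : 1 ≤ p)
    (lam : EuclideanSpace ℝ (Fin m))
    (xp : EuclideanSpace ℝ (Fin n)) (hxp : xp ∈ X)
    (g : EuclideanSpace ℝ (Fin n))
    (hg : ∀ y, f xp + ⟪g, y - xp⟫_ℝ ≤ f y)
    (hopt : ∀ x ∈ X,
      0 ≤ ⟪x - xp,
            g + (ContinuousLinearMap.adjoint A) lam +
              β ^ (1 / p) • (ContinuousLinearMap.adjoint A) (ip p (A xp - b))⟫_ℝ)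
    (lamp : EuclideanSpace ℝ (Fin m))
    (hlamp : lamp = lam + β ^ (1 / p) • ip p (A xp - b)) :
    (∀ x ∈ X, 0 ≤ ⟪x - xp, g + (ContinuousLinearMap.adjoint A) lamp⟫_ℝ) ∧
    (∀ μ : EuclideanSpace ℝ (Fin m),
      0 ≤ ⟪μ - lamp,
            -(A xp) + b + ((1 / β) * ‖lamp - lam‖ ^ (p - 1)) • (lamp - lam)⟫_ℝ) := by
  have hp0 : p ≠ 0 := by positivity
  constructor
  · intro x hx
    have h := hopt x hx
    simpa [hlamp, map_add, map_smul, add_assoc] using h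
  · intro μ
    set y : EuclideanSpace ℝ (Fin m) := A xp - b with hy
    have hd : lamp - lam = β ^ (1 / p) • ip p y := by
      rw [hlamp]; abel
    have hveq : -(A xp) + b + ((1 / β) * ‖lamp - lam‖ ^ (p - 1)) • (lamp - lam) = 0 := by
      by_cases h0 : y = 0
      · have hAb : A xp = b := by
          have := h0; rw [hy, sub_eq_zero] at this; exact this
        simp [hd, ip, h0, hAb]
      · have hny : (0:ℝ) < ‖y‖ := norm_pos_iff.mpr h0
        have hipy : ip p y = (‖y‖ ^ (1 - 1 / p))⁻¹ • y := by simp [ip, h0]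
        have hdn : ‖lamp - lam‖ = β ^ (1 / p) * ‖y‖ ^ (1 / p) := by
          rw [hd, hipy, norm_smul, norm_smul, Real.norm_eq_abs, Real.norm_eq_abs,
            abs_of_pos (Real.rpow_pos_of_pos hβ _),
            abs_of_pos (inv_pos.mpr (Real.rpow_pos_of_pos hny _))]
          have hkey : (‖y‖ ^ (1 - 1/p))⁻¹ * ‖y‖ = ‖y‖ ^ (1/p) := by
            rw [← Real.rpow_neg hny.le]
            nth_rewrite 2 [← Real.rpow_one ‖y‖]
            rw [← Real.rpow_add hny]
            congr 1; ring
          rw [hkey]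
        have hpow : (β ^ (1/p) * ‖y‖ ^ (1/p)) ^ (p-1) = β ^ (1-1/p) * ‖y‖ ^ (1-1/p) := by
          rw [Real.mul_rpow (Real.rpow_pos_of_pos hβ _).le (Real.rpow_pos_of_pos hny _).le,
            ← Real.rpow_mul hβ.le, ← Real.rpow_mul hny.le]
          congr 1 <;> field_simp <;> ring
        have h2 : (‖y‖ ^ (1-1/p)) ≠ 0 := (Real.rpow_pos_of_pos hny _).ne'
        have h1 : β ^ (1-1/p) * β ^ (1/p) = β := by
          rw [← Real.rpow_add hβ]; norm_num
        have hcoef : (1 / β) * (β ^ (1/p) * ‖y‖ ^ (1/p)) ^ (p-1) * β ^ (1/p) * (‖y‖ ^ (1-1/p))⁻¹ = 1 := by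
          rw [hpow,
            show (1/β) * (β^(1-1/p) * ‖y‖^(1-1/p)) * β^(1/p) * (‖y‖^(1-1/p))⁻¹
              = (β^(1-1/p) * β^(1/p)) * (‖y‖^(1-1/p) * (‖y‖^(1-1/p))⁻¹) / β by ring,
            h1, mul_inv_cancel₀ h2]
          field_simp
        have hAb : -(A xp) + b = -y := by rw [hy]; abel
        rw [hAb, hdn, hd, hipy, smul_smul, smul_smul, hcoef, one_smul]
        abel
    rw [hveq]
    simp
end

section
/- For every real number p ≥ 1 and all u, v ∈ ℝⁿ, the uniform convexity inequality (2/(p+1)) · (1/2)^{p−1} · ‖u − v‖^{p+1} ≤ ⟨u − v, ‖u‖^{p−1} u − ‖v‖^{p−1} v⟩ holds. -/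
set_option maxHeartbeats 1000000

open scoped InnerProductSpace

private lemma uci_superadd {x y p : ℝ} (hx : 0 ≤ x) (hy : 0 ≤ y) (hp : 1 ≤ p) :
    x ^ p + y ^ p ≤ (x + y) ^ p := by
  have h := NNReal.add_rpow_le_rpow_add x.toNNReal y.toNNReal hp
  have h2 := NNReal.coe_le_coe.2 h
  push_cast at h2
  rwa [Real.coe_toNNReal x hx, Real.coe_toNNReal y hy] at h2

private lemma uci_sq_rpow {x : ℝ} (p : ℝ) (hx : 0 ≤ x) :
    (x ^ 2) ^ ((p + 1) / 2) = x ^ (p + 1) := by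
  rw [← Real.rpow_two, ← Real.rpow_mul hx]
  congr 1
  ring

private lemma uci_rpow_succ {x : ℝ} (hx : x ≠ 0) (q : ℝ) : x ^ q = x ^ (q - 1) * x := by
  have h := Real.rpow_add_one hx (q - 1)
  rwa [sub_add_cancel] at h

private lemma uci_scalar (p a b c t : ℝ) (hp : 1 ≤ p) (hb : 0 ≤ b) (hba : b ≤ a)
    (ht : |t| ≤ a * b) (hc : 0 ≤ c) (hc2 : c ^ 2 = a ^ 2 + b ^ 2 - 2 * t) :
    (2 / (p + 1)) * (1 / 2) ^ (p - 1) * c ^ (p + 1) ≤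
      a ^ (p - 1) * a ^ 2 + b ^ (p - 1) * b ^ 2 - t * (a ^ (p - 1) + b ^ (p - 1)) := by
  have ha : 0 ≤ a := hb.trans hba
  have hC1 : 2 / (p + 1) ≤ 1 := by
    rw [div_le_one (by linarith)]; linarith
  have hhalf : ((1:ℝ)/2) ^ (p - 1) ≤ 1 :=
    Real.rpow_le_one (by norm_num) (by norm_num) (by linarith)
  have hhalf0 : (0:ℝ) ≤ ((1:ℝ)/2) ^ (p - 1) := Real.rpow_nonneg (by norm_num) _
  have hC0 : (0:ℝ) ≤ 2 / (p + 1) := by positivity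
  have hCpos : 0 ≤ (2 / (p + 1)) * ((1:ℝ)/2) ^ (p - 1) := by positivity
  have hCle1 : (2 / (p + 1)) * ((1:ℝ)/2) ^ (p - 1) ≤ 1 := by nlinarith
  rcases eq_or_lt_of_le hb with hb0 | hb0
  · -- b = 0
    have hb0 : b = 0 := hb0.symm
    subst hb0
    have ht0 : t = 0 := by
      have h1 : |t| ≤ 0 := by simpa using ht
      simpa using le_antisymm h1 (abs_nonneg t)
    subst ht0
    have hca : c = a := by
      have h1 : c ^ 2 = a ^ 2 := by rw [hc2]; ring
      nlinarith
    rw [hca]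
    rcases eq_or_lt_of_le ha with ha0 | ha0
    · rw [← ha0, Real.zero_rpow (by linarith : p + 1 ≠ 0)]
      norm_num
    · have hrw : a ^ (p - 1) * a ^ 2 = a ^ (p + 1) := by
        rw [show p + 1 = p - 1 + 2 by ring, Real.rpow_add ha0, Real.rpow_two]
      rw [hrw]
      have hap : 0 ≤ a ^ (p + 1) := Real.rpow_nonneg ha _
      nlinarith
  · -- b > 0
    have ha0 : 0 < a := lt_of_lt_of_le hb0 hba
    have htl : t ≤ a * b := (abs_le.1 ht).2
    have htr : -(a * b) ≤ t := (abs_le.1 ht).1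
    set lam : ℝ := (a * b - t) / (2 * (a * b)) with hlam
    have hab : (0:ℝ) < a * b := by positivity
    have hl0 : 0 ≤ lam := div_nonneg (by linarith) (by linarith)
    have hl1 : lam ≤ 1 := by
      rw [div_le_one (by linarith)]; linarith
    have hid : c ^ 2 = (1 - lam) * (a - b) ^ 2 + lam * (a + b) ^ 2 := by
      rw [hc2, hlam]; field_simp; ring
    have hq : (1:ℝ) ≤ (p + 1) / 2 := by linarith
    have hconv0 := (convexOn_rpow hq).2 (Set.mem_Ici.2 (sq_nonneg (a - b)))
      (Set.mem_Ici.2 (sq_nonneg (a + b))) (by linarith : (0:ℝ) ≤ 1 - lam) hl0 (by ring)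
    simp only [smul_eq_mul] at hconv0
    rw [uci_sq_rpow p (by linarith : (0:ℝ) ≤ a - b),
      uci_sq_rpow p (by linarith : (0:ℝ) ≤ a + b)] at hconv0
    have hconv : c ^ (p + 1) ≤ (1 - lam) * (a - b) ^ (p + 1) + lam * (a + b) ^ (p + 1) := by
      rw [← uci_sq_rpow p hc, hid]
      exact hconv0
    have hPa : a ^ p = a ^ (p - 1) * a := uci_rpow_succ (ne_of_gt ha0) p
    have hQb : b ^ p = b ^ (p - 1) * b := uci_rpow_succ (ne_of_gt hb0) p
    -- endpoint 1
    have h1 : (2 / (p + 1)) * ((1:ℝ)/2) ^ (p - 1) * (a - b) ^ (p + 1) ≤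
        (a - b) * (a ^ (p - 1) * a - b ^ (p - 1) * b) := by
      rw [← hPa, ← hQb]
      rcases eq_or_lt_of_le hba with he | hlt
      · subst he
        rw [sub_self, Real.zero_rpow (by linarith : p + 1 ≠ 0)]
        simp
      · have hd : (0:ℝ) < a - b := by linarith
        have hsplit : (a - b) ^ (p + 1) = (a - b) ^ p * (a - b) := by
          have h := uci_rpow_succ (ne_of_gt hd) (p + 1)
          simpa using h
        rw [hsplit]
        have hsup : (a - b) ^ p + b ^ p ≤ a ^ p := by
          have h := uci_superadd (le_of_lt hd) hb hp
          simpa using h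
        have hdn : 0 ≤ (a - b) ^ p := Real.rpow_nonneg (le_of_lt hd) _
        have hstep : (a - b) ^ p ≤ a ^ p - b ^ p := by linarith
        calc (2 / (p + 1)) * ((1:ℝ)/2) ^ (p - 1) * ((a - b) ^ p * (a - b))
            ≤ 1 * ((a - b) ^ p * (a - b)) := by
              apply mul_le_mul_of_nonneg_right hCle1 (by positivity)
          _ = (a - b) ^ p * (a - b) := by ring
          _ ≤ (a ^ p - b ^ p) * (a - b) :=
              mul_le_mul_of_nonneg_right hstep (le_of_lt hd)
          _ = (a - b) * (a ^ p - b ^ p) := by ring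
    -- endpoint 2
    have h2 : (2 / (p + 1)) * ((1:ℝ)/2) ^ (p - 1) * (a + b) ^ (p + 1) ≤
        (a + b) * (a ^ (p - 1) * a + b ^ (p - 1) * b) := by
      rw [← hPa, ← hQb]
      have hs : (0:ℝ) < a + b := by linarith
      have hsplit : (a + b) ^ (p + 1) = (a + b) ^ p * (a + b) := by
        have h := uci_rpow_succ (ne_of_gt hs) (p + 1)
        simpa using h
      rw [hsplit]
      have hmid : ((1/2) * a + (1/2) * b) ^ p ≤ (1/2) * a ^ p + (1/2) * b ^ p := by
        have h := (convexOn_rpow hp).2 (Set.mem_Ici.2 ha) (Set.mem_Ici.2 hb)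
          (by norm_num : (0:ℝ) ≤ 1/2) (by norm_num : (0:ℝ) ≤ 1/2) (by norm_num)
        simpa using h
      have hmr : ((1/2) * (a + b)) ^ p = ((1:ℝ)/2) ^ p * (a + b) ^ p :=
        Real.mul_rpow (by norm_num) (by linarith)
      have hhs : ((1:ℝ)/2) ^ p = ((1:ℝ)/2) ^ (p - 1) * (1/2) :=
        uci_rpow_succ (by norm_num) p
      have hmid' : ((1:ℝ)/2) ^ (p - 1) * (1/2) * (a + b) ^ p ≤
          (1/2) * a ^ p + (1/2) * b ^ p := by
        rw [← hhs, ← hmr]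
        convert hmid using 2
        ring
      have habp : 0 ≤ (a + b) ^ p := Real.rpow_nonneg (by linarith) _
      have hfac : (2 / (p + 1)) * ((1:ℝ)/2) ^ (p - 1) * (a + b) ^ p ≤
          ((1:ℝ)/2) ^ (p - 1) * (a + b) ^ p := by
        have := mul_le_mul_of_nonneg_right hC1 (mul_nonneg hhalf0 habp)
        calc (2 / (p + 1)) * ((1:ℝ)/2) ^ (p - 1) * (a + b) ^ p
            = (2 / (p + 1)) * (((1:ℝ)/2) ^ (p - 1) * (a + b) ^ p) := by ring
          _ ≤ 1 * (((1:ℝ)/2) ^ (p - 1) * (a + b) ^ p) := this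
          _ = ((1:ℝ)/2) ^ (p - 1) * (a + b) ^ p := by ring
      have hmain : ((1:ℝ)/2) ^ (p - 1) * (a + b) ^ p ≤ a ^ p + b ^ p := by
        linarith [mul_le_mul_of_nonneg_left hmid' (by norm_num : (0:ℝ) ≤ 2)]
      calc (2 / (p + 1)) * ((1:ℝ)/2) ^ (p - 1) * ((a + b) ^ p * (a + b))
          = ((2 / (p + 1)) * ((1:ℝ)/2) ^ (p - 1) * (a + b) ^ p) * (a + b) := by ring
        _ ≤ (a ^ p + b ^ p) * (a + b) :=
            mul_le_mul_of_nonneg_right (hfac.trans hmain) (le_of_lt hs)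
        _ = (a + b) * (a ^ p + b ^ p) := by ring
    have hfin : ∀ P Q : ℝ, (1 - lam) * ((a - b) * (P * a - Q * b)) +
        lam * ((a + b) * (P * a + Q * b)) = P * a ^ 2 + Q * b ^ 2 - t * (P + Q) := by
      intro P Q
      rw [hlam]
      field_simp
      ring
    calc (2 / (p + 1)) * ((1:ℝ)/2) ^ (p - 1) * c ^ (p + 1)
        ≤ (2 / (p + 1)) * ((1:ℝ)/2) ^ (p - 1) *
            ((1 - lam) * (a - b) ^ (p + 1) + lam * (a + b) ^ (p + 1)) :=
          mul_le_mul_of_nonneg_left hconv hCpos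
      _ = (1 - lam) * ((2 / (p + 1)) * ((1:ℝ)/2) ^ (p - 1) * (a - b) ^ (p + 1)) +
            lam * ((2 / (p + 1)) * ((1:ℝ)/2) ^ (p - 1) * (a + b) ^ (p + 1)) := by ring
      _ ≤ (1 - lam) * ((a - b) * (a ^ (p - 1) * a - b ^ (p - 1) * b)) +
            lam * ((a + b) * (a ^ (p - 1) * a + b ^ (p - 1) * b)) :=
          add_le_add (mul_le_mul_of_nonneg_left h1 (by linarith))
            (mul_le_mul_of_nonneg_left h2 hl0)
      _ = a ^ (p - 1) * a ^ 2 + b ^ (p - 1) * b ^ 2 - t * (a ^ (p - 1) + b ^ (p - 1)) :=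
          hfin (a ^ (p - 1)) (b ^ (p - 1))

private lemma uci_aux {n : ℕ} (p : ℝ) (hp : 1 ≤ p) (u v : EuclideanSpace ℝ (Fin n))
    (hba : ‖v‖ ≤ ‖u‖) :
    (2 / (p + 1)) * (1 / 2) ^ (p - 1) * ‖u - v‖ ^ (p + 1) ≤
      ⟪u - v, (‖u‖ ^ (p - 1)) • u - (‖v‖ ^ (p - 1)) • v⟫_ℝ := by
  have ht : |⟪u, v⟫_ℝ| ≤ ‖u‖ * ‖v‖ := abs_real_inner_le_norm u v
  have hc2 : ‖u - v‖ ^ 2 = ‖u‖ ^ 2 + ‖v‖ ^ 2 - 2 * ⟪u, v⟫_ℝ := by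
    rw [norm_sub_sq_real]; ring
  have hexp : ⟪u - v, (‖u‖ ^ (p - 1)) • u - (‖v‖ ^ (p - 1)) • v⟫_ℝ =
      ‖u‖ ^ (p - 1) * ‖u‖ ^ 2 + ‖v‖ ^ (p - 1) * ‖v‖ ^ 2 -
        ⟪u, v⟫_ℝ * (‖u‖ ^ (p - 1) + ‖v‖ ^ (p - 1)) := by
    rw [inner_sub_right, real_inner_smul_right, real_inner_smul_right,
      inner_sub_left, inner_sub_left, real_inner_self_eq_norm_sq,
      real_inner_self_eq_norm_sq, real_inner_comm v u]
    ring
  rw [hexp]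
  exact uci_scalar p ‖u‖ ‖v‖ ‖u - v‖ ⟪u, v⟫_ℝ hp (norm_nonneg v) hba ht
    (norm_nonneg _) hc2

theorem uniform_convexity_inequality {n : ℕ}
    (p : ℝ) (hp : 1 ≤ p) (u v : EuclideanSpace ℝ (Fin n)) :
    (2 / (p + 1)) * (1 / 2) ^ (p - 1) * ‖u - v‖ ^ (p + 1) ≤
      ⟪u - v, (‖u‖ ^ (p - 1)) • u - (‖v‖ ^ (p - 1)) • v⟫_ℝ := by
  rcases le_total ‖v‖ ‖u‖ with h | h
  · exact uci_aux p hp u v h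
  · have key := uci_aux p hp v u h
    have hflip : ⟪v - u, (‖v‖ ^ (p - 1)) • v - (‖u‖ ^ (p - 1)) • u⟫_ℝ =
        ⟪u - v, (‖u‖ ^ (p - 1)) • u - (‖v‖ ^ (p - 1)) • v⟫_ℝ := by
      rw [← neg_sub u v, ← neg_sub ((‖u‖ ^ (p - 1)) • u) ((‖v‖ ^ (p - 1)) • v),
        inner_neg_neg]
    rw [norm_sub_rev v u, hflip] at key
    exact key
end

section
/- Let A : ℝⁿ → ℝᵐ be a linear map with adjoint Aᵀ and operator norm ‖A‖, let b ∈ ℝᵐ, λ ∈ ℝᵐ, β > 0, and p ≥ 1. Define G : ℝⁿ → ℝⁿ by G(x) = Aᵀλ + β^{1/p} Aᵀ iₚ(A x − b), which is the gradient of ψ(x) = ⟨λ, A x − b⟩ + (β^{1/p}/(1 + 1/p)) ‖A x − b‖^{1 + 1/p}. Then for all x, y ∈ ℝⁿ, ‖G(y) − G(x)‖ ≤ M_p ‖y − x‖^{1/p}, where M_p = ((p+1) · 2^{p−2})^{1/p} · β^{1/p} · ‖A‖^{1 + 1/p}. -/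
open scoped InnerProductSpace
open Classical

lemma my_add_rpow_le {α x y : ℝ} (hα0 : 0 ≤ α) (hα1 : α ≤ 1) (hx : 0 ≤ x) (hy : 0 ≤ y) :
    (x + y) ^ α ≤ x ^ α + y ^ α := by
  have h := NNReal.rpow_add_le_add_rpow x.toNNReal y.toNNReal hα0 hα1
  rw [← NNReal.coe_le_coe] at h
  push_cast at h
  rwa [Real.coe_toNNReal _ hx, Real.coe_toNNReal _ hy] at h

lemma scalarA {α a b : ℝ} (hα0 : 0 ≤ α) (hα1 : α ≤ 1) (hb : 0 ≤ b) (hab : b ≤ a) :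
    a ^ α - b ^ α ≤ (a - b) ^ α := by
  have h := my_add_rpow_le hα0 hα1 (by linarith : (0:ℝ) ≤ a - b) hb
  rw [sub_add_cancel] at h
  linarith

lemma scalarB {α a b : ℝ} (hα0 : 0 ≤ α) (hα1 : α ≤ 1) (ha : 0 ≤ a) (hb : 0 ≤ b) :
    a ^ α + b ^ α ≤ 2 ^ (1 - α) * (a + b) ^ α := by
  have h := (Real.concaveOn_rpow hα0 hα1).2 (Set.mem_Ici.2 ha) (Set.mem_Ici.2 hb)
    (by norm_num : (0:ℝ) ≤ 1/2) (by norm_num : (0:ℝ) ≤ 1/2) (by norm_num)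
  simp only [smul_eq_mul] at h
  have h2 : ((1/2 : ℝ) * a + 1/2 * b) ^ α = (a + b) ^ α / 2 ^ α := by
    rw [show (1/2:ℝ)*a + 1/2*b = (a+b)/2 by ring,
      Real.div_rpow (by linarith) (by norm_num)]
  rw [h2] at h
  have h3 : (2:ℝ) ^ (1 - α) = 2 / 2 ^ α := by
    rw [Real.rpow_sub (by norm_num), Real.rpow_one]
  have h4 : (0:ℝ) < 2 ^ α := Real.rpow_pos_of_pos (by norm_num) _
  rw [h3, div_mul_eq_mul_div, le_div_iff₀ h4]
  have h5 := mul_le_mul_of_nonneg_right h h4.le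
  rw [div_mul_cancel₀ _ h4.ne'] at h5
  nlinarith

lemma norm_ip {m : ℕ} {p : ℝ} (hp : 1 ≤ p) (u : EuclideanSpace ℝ (Fin m)) :
    ‖ip p u‖ = ‖u‖ ^ (1/p) := by
  have hp0 : 0 < p := lt_of_lt_of_le one_pos hp
  by_cases hu : u = 0
  · rw [hu]
    simp [ip, one_div, Real.zero_rpow (show (p:ℝ)⁻¹ ≠ 0 by positivity)]
  · have hn : 0 < ‖u‖ := norm_pos_iff.2 hu
    rw [ip, if_neg hu, norm_smul, Real.norm_eq_abs,
      abs_of_nonneg (by positivity), ← Real.rpow_neg hn.le]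
    nth_rewrite 2 [← Real.rpow_one ‖u‖]
    rw [← Real.rpow_add hn]
    norm_num

lemma ip_holder {m : ℕ} {p : ℝ} (hp : 1 ≤ p) (u v : EuclideanSpace ℝ (Fin m)) :
    ‖ip p u - ip p v‖ ≤ 2 ^ (1 - 1/p) * ‖u - v‖ ^ (1/p) := by
  have hp0 : 0 < p := lt_of_lt_of_le one_pos hp
  set α : ℝ := 1/p with hαdef
  have hα0 : 0 < α := by positivity
  have hα1 : α ≤ 1 := (div_le_one hp0).2 hp
  have h2α : (1:ℝ) ≤ 2 ^ (1-α) := Real.one_le_rpow (by norm_num) (by linarith)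
  have h0 : ip p (0 : EuclideanSpace ℝ (Fin m)) = 0 := by simp [ip]
  by_cases hu : u = 0
  · rw [hu, h0, zero_sub, norm_neg, norm_ip hp, zero_sub, norm_neg]
    exact le_mul_of_one_le_left (by positivity) h2α
  by_cases hv : v = 0
  · rw [hv, h0, sub_zero, norm_ip hp, sub_zero]
    exact le_mul_of_one_le_left (by positivity) h2α
  -- main case
  have ha : 0 < ‖u‖ := norm_pos_iff.2 hu
  have hb : 0 < ‖v‖ := norm_pos_iff.2 hv
  set a : ℝ := ‖u‖
  set b : ℝ := ‖v‖
  set c : ℝ := ⟪u, v⟫_ℝ with hcdef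
  have hc : |c| ≤ a * b := abs_real_inner_le_norm u v
  have hip_u : ip p u = (a ^ (α - 1)) • u := by
    rw [ip, if_neg hu, ← Real.rpow_neg ha.le, neg_sub]
  have hip_v : ip p v = (b ^ (α - 1)) • v := by
    rw [ip, if_neg hv, ← Real.rpow_neg hb.le, neg_sub]
  set ka : ℝ := a ^ (α - 1) with hkadef
  set kb : ℝ := b ^ (α - 1) with hkbdef
  have hka0 : 0 ≤ ka := Real.rpow_nonneg ha.le _
  have hkb0 : 0 ≤ kb := Real.rpow_nonneg hb.le _
  have hkaa : ka * a = a ^ α := by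
    rw [hkadef, Real.rpow_sub ha, Real.rpow_one, div_mul_cancel₀ _ ha.ne']
  have hkbb : kb * b = b ^ α := by
    rw [hkbdef, Real.rpow_sub hb, Real.rpow_one, div_mul_cancel₀ _ hb.ne']
  have hN : ‖ip p u - ip p v‖^2 = (a^α)^2 + (b^α)^2 - 2*(ka*kb)*c := by
    rw [hip_u, hip_v, norm_sub_sq_real, norm_smul, norm_smul,
      real_inner_smul_left, real_inner_smul_right, Real.norm_eq_abs,
      Real.norm_eq_abs, abs_of_nonneg hka0, abs_of_nonneg hkb0, ← hkaa, ← hkbb]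
    ring
  have hT : ‖u - v‖^2 = a^2 + b^2 - 2*c := by
    rw [norm_sub_sq_real]; ring
  have hab0 : (0:ℝ) < a * b := by positivity
  set s : ℝ := (c + a*b)/(2*(a*b)) with hsdef
  have hs0 : 0 ≤ s := by
    apply div_nonneg _ (by positivity)
    have := (abs_le.1 hc).1; linarith
  have hs1 : s ≤ 1 := by
    rw [div_le_one (by positivity)]
    have := (abs_le.1 hc).2; linarith
  have hs_eq : c = 2*s*(a*b) - a*b := by
    rw [hsdef]; field_simp; ring
  have hkab : ka * kb * (a*b) = a^α * b^α := by
    rw [← hkaa, ← hkbb]; ring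
  have hLHS : (a^α)^2 + (b^α)^2 - 2*(ka*kb)*c
      = (1-s)*(a^α+b^α)^2 + s*(a^α-b^α)^2 := by
    rw [hs_eq]
    linear_combination (2 - 4*s) * hkab
  have E1 : (a^α + b^α)^2 ≤ (2^(1-α))^2 * ((a+b)^2)^α := by
    have h1 : ((a+b)^2)^α = ((a+b)^α)^2 := by
      rw [sq (a+b), Real.mul_rpow (by positivity) (by positivity), ← sq]
    rw [h1, ← mul_pow]
    exact pow_le_pow_left₀ (by positivity) (scalarB hα0.le hα1 ha.le hb.le) 2
  have E2 : (a^α - b^α)^2 ≤ (2^(1-α))^2 * ((a-b)^2)^α := by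
    have h1 : ((a-b)^2)^α = (|a-b|^α)^2 := by
      rw [← sq_abs (a-b), sq |a-b|, Real.mul_rpow (abs_nonneg _) (abs_nonneg _), ← sq]
    have h2 : |a^α - b^α| ≤ |a-b|^α := by
      rcases le_total b a with h | h
      · rw [abs_of_nonneg (sub_nonneg.2 (Real.rpow_le_rpow hb.le h hα0.le)),
          abs_of_nonneg (sub_nonneg.2 h)]
        exact scalarA hα0.le hα1 hb.le h
      · rw [abs_sub_comm, abs_sub_comm a b,
          abs_of_nonneg (sub_nonneg.2 (Real.rpow_le_rpow ha.le h hα0.le)),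
          abs_of_nonneg (sub_nonneg.2 h)]
        exact scalarA hα0.le hα1 ha.le h
    rw [h1, ← mul_pow]
    calc (a^α - b^α)^2 = |a^α - b^α|^2 := (sq_abs _).symm
      _ ≤ (|a-b|^α)^2 := pow_le_pow_left₀ (abs_nonneg _) h2 2
      _ ≤ (2^(1-α) * |a-b|^α)^2 :=
          pow_le_pow_left₀ (by positivity)
            (le_mul_of_one_le_left (by positivity) h2α) 2
  have hcv := (Real.concaveOn_rpow hα0.le hα1).2
    (Set.mem_Ici.2 (by positivity : (0:ℝ) ≤ (a+b)^2))
    (Set.mem_Ici.2 (by positivity : (0:ℝ) ≤ (a-b)^2))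
    (by linarith : 0 ≤ 1 - s) hs0 (by ring)
  simp only [smul_eq_mul] at hcv
  have harg : (1-s)*(a+b)^2 + s*(a-b)^2 = a^2 + b^2 - 2*c := by
    rw [hs_eq]; ring
  rw [harg] at hcv
  -- assemble the squared inequality
  have hsq : ‖ip p u - ip p v‖^2 ≤ (2^(1-α) * ‖u - v‖^α)^2 := by
    have ht2 : (‖u - v‖^α)^2 = (‖u - v‖^2)^α := by
      rw [← Real.rpow_two, ← Real.rpow_two, ← Real.rpow_mul (norm_nonneg _),
        ← Real.rpow_mul (norm_nonneg _), mul_comm]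
    have hRHS : (2^(1-α) * ‖u - v‖^α)^2 = (2^(1-α))^2 * (a^2+b^2-2*c)^α := by
      rw [mul_pow, ht2, hT]
    rw [hN, hLHS, hRHS]
    calc (1-s)*(a^α+b^α)^2 + s*(a^α-b^α)^2
        ≤ (1-s)*((2^(1-α))^2 * ((a+b)^2)^α) + s*((2^(1-α))^2 * ((a-b)^2)^α) := by
          apply add_le_add
          · exact mul_le_mul_of_nonneg_left E1 (by linarith)
          · exact mul_le_mul_of_nonneg_left E2 hs0
      _ = (2^(1-α))^2 * ((1-s)*((a+b)^2)^α + s*((a-b)^2)^α) := by ring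
      _ ≤ (2^(1-α))^2 * (a^2+b^2-2*c)^α := by
          apply mul_le_mul_of_nonneg_left hcv (by positivity)
  have h1 := Real.sqrt_le_sqrt hsq
  rwa [Real.sqrt_sq (norm_nonneg _), Real.sqrt_sq (by positivity)] at h1

theorem grad_psi_holder {n m : ℕ}
    (A : EuclideanSpace ℝ (Fin n) →L[ℝ] EuclideanSpace ℝ (Fin m))
    (b lam : EuclideanSpace ℝ (Fin m))
    (β p : ℝ) (hβ : 0 < β) (hp : 1 ≤ p)
    (G : EuclideanSpace ℝ (Fin n) → EuclideanSpace ℝ (Fin n))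
    (hG : ∀ x, G x = (ContinuousLinearMap.adjoint A) lam +
      β ^ (1 / p) • (ContinuousLinearMap.adjoint A) (ip p (A x - b)))
    (x y : EuclideanSpace ℝ (Fin n)) :
    ‖G y - G x‖ ≤
      ((p + 1) * 2 ^ (p - 2)) ^ (1 / p) * β ^ (1 / p) * ‖A‖ ^ (1 + 1 / p) *
        ‖y - x‖ ^ (1 / p) := by
  have hp0 : 0 < p := lt_of_lt_of_le one_pos hp
  set α : ℝ := 1/p with hαdef
  have hα0 : 0 < α := by positivity
  have hβα : (0:ℝ) < β ^ α := Real.rpow_pos_of_pos hβ _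
  set d : EuclideanSpace ℝ (Fin m) := ip p (A y - b) - ip p (A x - b) with hddef
  have hdiff : G y - G x = β ^ α • ((ContinuousLinearMap.adjoint A) d) := by
    rw [hG, hG, hddef, map_sub, smul_sub]
    abel
  have hnorm : ‖G y - G x‖ = β ^ α * ‖(ContinuousLinearMap.adjoint A) d‖ := by
    rw [hdiff, norm_smul, Real.norm_eq_abs, abs_of_pos hβα]
  have hadj : ‖ContinuousLinearMap.adjoint A‖ = ‖A‖ :=
    ContinuousLinearMap.adjoint.norm_map A
  have hAyx : A y - b - (A x - b) = A (y - x) := by rw [map_sub]; abel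
  have hd : ‖d‖ ≤ 2 ^ (1 - α) * ‖A (y - x)‖ ^ α := by
    have := ip_holder hp (A y - b) (A x - b)
    rwa [hAyx] at this
  by_cases hA : ‖A‖ = 0
  · have hA0 : A = 0 := by rwa [← ContinuousLinearMap.opNorm_zero_iff]
    have : G y - G x = 0 := by
      rw [hdiff, hddef, hA0]
      simp
    rw [this, norm_zero]
    positivity
  have hApos : 0 < ‖A‖ := lt_of_le_of_ne (norm_nonneg _) (Ne.symm hA)
  have hconst : (2:ℝ) ^ (1 - α) ≤ ((p + 1) * 2 ^ (p - 2)) ^ α := by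
    have e1 : (2:ℝ) ^ (1 - α) = ((2:ℝ) ^ (p - 1)) ^ α := by
      rw [← Real.rpow_mul (by norm_num : (0:ℝ) ≤ 2)]
      congr 1
      rw [hαdef]
      field_simp
    rw [e1]
    apply Real.rpow_le_rpow (by positivity) _ hα0.le
    have e2 : (2:ℝ) ^ (p - 1) = 2 * 2 ^ (p - 2) := by
      rw [show p - 1 = 1 + (p - 2) by ring, Real.rpow_add two_pos, Real.rpow_one]
    rw [e2]
    have h2 : (0:ℝ) < 2 ^ (p - 2) := Real.rpow_pos_of_pos two_pos _
    nlinarith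
  calc ‖G y - G x‖ = β ^ α * ‖(ContinuousLinearMap.adjoint A) d‖ := hnorm
    _ ≤ β ^ α * (‖A‖ * ‖d‖) := by
        apply mul_le_mul_of_nonneg_left _ hβα.le
        rw [← hadj]
        exact (ContinuousLinearMap.adjoint A).le_opNorm d
    _ ≤ β ^ α * (‖A‖ * (2 ^ (1 - α) * ‖A (y - x)‖ ^ α)) := by gcongr
    _ ≤ β ^ α * (‖A‖ * (2 ^ (1 - α) * (‖A‖ ^ α * ‖y - x‖ ^ α))) := by
        gcongr
        rw [← Real.mul_rpow (norm_nonneg _) (norm_nonneg _)]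
        exact Real.rpow_le_rpow (norm_nonneg _) (A.le_opNorm _) hα0.le
    _ = 2 ^ (1 - α) * β ^ α * ‖A‖ ^ (1 + α) * ‖y - x‖ ^ α := by
        rw [Real.rpow_add hApos, Real.rpow_one]
        ring
    _ ≤ ((p + 1) * 2 ^ (p - 2)) ^ α * β ^ α * ‖A‖ ^ (1 + α) * ‖y - x‖ ^ α := by
        gcongr
end
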